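/- arXiv:quant-ph/0703061 — 5 statements merged into one kernel-verified Lean document; each statement's English description precedes it below -/
import Mathlib

section
/- Let ħ > 0 and let M be a real symmetric positive-definite 2N×2N matrix with symplectic eigenvalues μ_1 ≥ μ_2 ≥ … ≥ μ_N > 0. Then μ_1 ≤ 1 if and only if the complex Hermitian matrix (ħ/2)M^{−1} + (iħ/2)J is positive semidefinite. -/
set_option maxHeartbeats 1000000


open MeasureTheory Matrix Complex Real
open scoped ComplexOrder

/-- The standard symplectic matrix `J = [[0, I], [-I, 0]]` (N×N blocks). -/
noncomputable def stdJ (N : ℕ) : Matrix (Fin N ⊕ Fin N) (Fin N ⊕ Fin N) ℝ :=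
  Matrix.fromBlocks 0 1 (-1) 0

/-- `μ` is a symplectic eigenvalue of the real `2N×2N` matrix `M` if `μ > 0` and
`iμ` is an eigenvalue of the complex matrix `JM`. -/
noncomputable def IsSympEig {N : ℕ} (M : Matrix (Fin N ⊕ Fin N) (Fin N ⊕ Fin N) ℝ)
    (μ : ℝ) : Prop :=
  0 < μ ∧ ∃ v : (Fin N ⊕ Fin N) → ℂ, v ≠ 0 ∧
    ((stdJ N * M).map (fun r => (r : ℂ))) *ᵥ v = (Complex.I * (μ : ℂ)) • v

section Aux

variable {n : Type*} [Fintype n] [DecidableEq n]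

omit [Fintype n] [DecidableEq n] in
lemma mapC_herm (A : Matrix n n ℝ) (h : A.IsHermitian) :
    (A.map (fun r => (r:ℂ))).IsHermitian := by
  unfold Matrix.IsHermitian
  rw [← Matrix.conjTranspose_map (fun r : ℝ => (r:ℂ)) (fun x => by simp), h]

omit [DecidableEq n] in
lemma mapC_mul (A B : Matrix n n ℝ) :
    (A*B).map (fun r => (r:ℂ)) = A.map (fun r => (r:ℂ)) * B.map (fun r => (r:ℂ)) :=
  Matrix.map_mul (f := Complex.ofRealHom)

lemma posDef_mapC {M : Matrix n n ℝ} (hM : M.PosDef) : (M.map (fun r => (r:ℂ))).PosDef := by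
  set S := (open scoped MatrixOrder in CFC.sqrt M) with hS
  have hSS : S * S = M := (open scoped MatrixOrder in CFC.sqrt_mul_sqrt_self M hM.posSemidef.nonneg)
  have hSh : S.IsHermitian := (open scoped MatrixOrder in (CFC.sqrt_nonneg M).posSemidef.isHermitian)
  have hMc : M.map (fun r => (r:ℂ)) = (S.map (fun r => (r:ℂ)))ᴴ * (S.map (fun r => (r:ℂ))) := by
    rw [(mapC_herm S hSh).eq, ← mapC_mul, hSS]
  have hpsd : (M.map (fun r => (r:ℂ))).PosSemidef := by
    rw [hMc]; exact Matrix.posSemidef_conjTranspose_mul_self _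
  refine PosDef.of_dotProduct_mulVec_pos hpsd.isHermitian fun x hx => ?_
  refine lt_of_le_of_ne (hpsd.dotProduct_mulVec_nonneg x) fun h0 => hx ?_
  have h1 := (hpsd.dotProduct_mulVec_zero_iff x).mp h0.symm
  have hdet : (M.map (fun r => (r:ℂ))).det ≠ 0 := by
    rw [show M.map (fun r => (r:ℂ)) = Complex.ofRealHom.mapMatrix M from rfl,
      ← RingHom.map_det]
    simpa using hM.det_pos.ne'
  have hinj : Function.Injective ((M.map (fun r => (r:ℂ))) *ᵥ ·) :=
    Matrix.mulVec_injective_iff_isUnit.mpr (Matrix.isUnit_iff_isUnit_det _ |>.mpr hdet.isUnit)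
  have h2 : (M.map (fun r => (r:ℂ))) *ᵥ x = (M.map (fun r => (r:ℂ))) *ᵥ 0 := by simpa using h1
  exact hinj h2

lemma posSemidef_smul_ofReal {A : Matrix n n ℂ} (hA : A.PosSemidef) {r : ℝ} (hr : 0 ≤ r) :
    ((r:ℂ) • A).PosSemidef := by
  refine PosSemidef.of_dotProduct_mulVec_nonneg ?_ ?_
  · unfold Matrix.IsHermitian
    rw [Matrix.conjTranspose_smul, hA.isHermitian.eq]
    norm_num
  · intro x
    rw [Matrix.smul_mulVec, dotProduct_smul, smul_eq_mul]
    exact mul_nonneg (by rw [Complex.zero_le_real]; exact hr) (hA.dotProduct_mulVec_nonneg x)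

end Aux

lemma stdJ_transpose (N : ℕ) : (stdJ N)ᵀ = -(stdJ N) := by
  simp [stdJ, Matrix.fromBlocks_transpose, Matrix.fromBlocks_neg]

lemma stdJc_conjTranspose (N : ℕ) :
    ((stdJ N).map (fun r => (r:ℂ)))ᴴ = -((stdJ N).map (fun r => (r:ℂ))) := by
  rw [← Matrix.conjTranspose_map (fun r : ℝ => (r:ℂ)) (fun x => by simp)]
  rw [show (stdJ N)ᴴ = (stdJ N)ᵀ from rfl, stdJ_transpose]
  ext i j; simp

/-- For a real symmetric positive definite `2N×2N` matrix `M` with symplectic spectrum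
`μ 0 ≥ μ 1 ≥ ⋯ ≥ μ (N-1) > 0`, one has `μ 0 ≤ 1` iff the complex Hermitian matrix
`(ℏ/2)M⁻¹ + (iℏ/2)J` is positive semidefinite. -/
theorem largest_sympEig_le_one_iff_posSemidef
    {N : ℕ} (hN : 0 < N) (ℏ : ℝ) (hℏ : 0 < ℏ)
    (M : Matrix (Fin N ⊕ Fin N) (Fin N ⊕ Fin N) ℝ) (hM : M.PosDef)
    (μ : Fin N → ℝ) (hμpos : ∀ i, 0 < μ i) (hμmono : Antitone μ)
    (hspec : ∀ c : ℝ, IsSympEig M c ↔ ∃ i, c = μ i) :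
    μ ⟨0, hN⟩ ≤ 1 ↔
      (((ℏ / 2 : ℝ) : ℂ) • (M⁻¹).map (fun r => (r : ℂ))
        + (Complex.I * ((ℏ / 2 : ℝ) : ℂ)) • (stdJ N).map (fun r => (r : ℂ))).PosSemidef := by
  classical
  set Mc := M.map (fun r => (r:ℂ)) with hMcdef
  set Ac := (M⁻¹).map (fun r => (r:ℂ)) with hAcdef
  set Jc := (stdJ N).map (fun r => (r:ℂ)) with hJcdef
  have hMcPD : Mc.PosDef := posDef_mapC hM
  have hMinv : M⁻¹ * M = 1 := Matrix.nonsing_inv_mul M hM.det_pos.ne'.isUnit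
  have hMinv' : M * M⁻¹ = 1 := Matrix.mul_nonsing_inv M hM.det_pos.ne'.isUnit
  have hAcMc : Ac * Mc = 1 := by
    rw [hAcdef, hMcdef, ← mapC_mul, hMinv]
    exact Matrix.map_one _ Complex.ofReal_zero Complex.ofReal_one
  have hMcAc : Mc * Ac = 1 := by
    rw [hAcdef, hMcdef, ← mapC_mul, hMinv']
    exact Matrix.map_one _ Complex.ofReal_zero Complex.ofReal_one
  have hJMc : ((stdJ N * M).map (fun r => (r:ℂ))) = Jc * Mc := mapC_mul _ _
  constructor
  · -- forward direction
    intro hle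
    set R := (open scoped MatrixOrder in CFC.sqrt Mc) with hRdef
    have hRpsd : R.PosSemidef := (open scoped MatrixOrder in (CFC.sqrt_nonneg Mc).posSemidef)
    have hRR : R * R = Mc := (open scoped MatrixOrder in CFC.sqrt_mul_sqrt_self Mc hMcPD.posSemidef.nonneg)
    have hRh : Rᴴ = R := hRpsd.isHermitian
    have hRdet : R.det ≠ 0 := by
      intro h0
      have : Mc.det = 0 := by rw [← hRR, Matrix.det_mul, h0, mul_zero]
      exact hMcPD.det_pos.ne' this
    have hRunit : IsUnit R := (Matrix.isUnit_iff_isUnit_det _).mpr hRdet.isUnit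
    have hRinv : R⁻¹ * R = 1 := Matrix.nonsing_inv_mul R hRdet.isUnit
    have hRinv' : R * R⁻¹ = 1 := Matrix.mul_nonsing_inv R hRdet.isUnit
    clear hRdef
    clear_value R
    set T : Matrix (Fin N ⊕ Fin N) (Fin N ⊕ Fin N) ℂ := R * Jc * R with hTdef
    set H' : Matrix (Fin N ⊕ Fin N) (Fin N ⊕ Fin N) ℂ := 1 + Complex.I • T with hH'def
    have hJch : Jcᴴ = -Jc := by
      rw [hJcdef]; exact stdJc_conjTranspose N
    have hTct : Tᴴ = -T := by
      rw [hTdef, Matrix.conjTranspose_mul, Matrix.conjTranspose_mul, hRh, hJch,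
        neg_mul, mul_neg, mul_assoc]
    have hH'h : H'.IsHermitian := by
      unfold Matrix.IsHermitian
      rw [hH'def, Matrix.conjTranspose_add, Matrix.conjTranspose_smul, hTct,
        Matrix.conjTranspose_one]
      simp [Complex.conj_I]
    have hEig : ∀ i, 0 ≤ hH'h.eigenvalues i := by
      intro i
      by_contra hneg
      push_neg at hneg
      set α : ℝ := hH'h.eigenvalues i with hα
      set u : (Fin N ⊕ Fin N) → ℂ := ⇑(hH'h.eigenvectorBasis i) with hu
      have hu0 : u ≠ 0 := by
        simpa [hu] using hH'h.eigenvectorBasis.orthonormal.ne_zero i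
      have huEq : H' *ᵥ u = (α : ℂ) • u := by
        simpa [hu, hα] using hH'h.mulVec_eigenvectorBasis i
      have hTu : T *ᵥ u = (Complex.I * ((1 : ℂ) - α)) • u := by
        have h1 : u + Complex.I • (T *ᵥ u) = (α : ℂ) • u := by
          rw [← huEq, hH'def, Matrix.add_mulVec, Matrix.one_mulVec,
            Matrix.smul_mulVec]
        have h2 : Complex.I • (T *ᵥ u) = ((α : ℂ) - 1) • u := by
          rw [sub_smul, ← h1, one_smul]; abel
        have h3 : T *ᵥ u = (-Complex.I) • (Complex.I • (T *ᵥ u)) := by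
          rw [smul_smul]; simp
        rw [h3, h2, smul_smul]
        have hsc : (-Complex.I) * ((α:ℂ) - 1) = Complex.I * ((1:ℂ) - (α:ℂ)) := by ring
        rw [hsc]
      obtain ⟨v, hv⟩ : ∃ v, v = R⁻¹ *ᵥ u := ⟨_, rfl⟩
      have huv : u = R *ᵥ v := by
        rw [hv, Matrix.mulVec_mulVec, hRinv', Matrix.one_mulVec]
      have hv0 : v ≠ 0 := by
        intro h0
        apply hu0
        rw [huv, h0, Matrix.mulVec_zero]
      have hkey : (Jc * Mc) *ᵥ v = (Complex.I * (((1:ℝ) - α : ℝ) : ℂ)) • v := by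
        have hRinj : Function.Injective (R *ᵥ ·) :=
          Matrix.mulVec_injective_iff_isUnit.mpr hRunit
        apply hRinj
        show R *ᵥ ((Jc * Mc) *ᵥ v) = R *ᵥ ((Complex.I * (((1:ℝ) - α : ℝ) : ℂ)) • v)
        rw [Matrix.mulVec_smul]
        have heq : R *ᵥ ((Jc * Mc) *ᵥ v) = T *ᵥ u := by
          calc R *ᵥ ((Jc * Mc) *ᵥ v) = (R * (Jc * Mc)) *ᵥ v := by
                rw [Matrix.mulVec_mulVec]
          _ = (R * Jc * R * R) *ᵥ v := by
                rw [← hRR, show R * (Jc * (R * R)) = R * Jc * R * R from by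
                  simp only [mul_assoc]]
          _ = (R * Jc * R) *ᵥ (R *ᵥ v) := by rw [Matrix.mulVec_mulVec]
          _ = T *ᵥ u := by rw [hTdef, huv]
        have hsc : Complex.I * ((1 : ℂ) - (α:ℂ)) = Complex.I * (((1:ℝ) - α : ℝ) : ℂ) := by
          push_cast; ring
        rw [heq, hTu, ← huv, hsc]
      have hsymp : IsSympEig M (1 - α) := by
        refine ⟨by linarith, v, hv0, ?_⟩
        rw [hJMc]
        exact hkey
      obtain ⟨j, hj⟩ := (hspec (1 - α)).mp hsymp
      have hle' : μ j ≤ μ ⟨0, hN⟩ := hμmono (by simp [Fin.le_def])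
      rw [← hj] at hle'
      linarith
    have hH'psd : H'.PosSemidef := hH'h.posSemidef_iff_eigenvalues_nonneg.mpr hEig
    have hconj : (R⁻¹ᴴ * H' * R⁻¹).PosSemidef := hH'psd.conjTranspose_mul_mul_same R⁻¹
    have hRih : R⁻¹ᴴ = R⁻¹ := by rw [Matrix.conjTranspose_nonsing_inv, hRh]
    have hform : R⁻¹ᴴ * H' * R⁻¹ = Ac + Complex.I • Jc := by
      rw [hRih, hH'def, hTdef]
      have hAc : Ac = Mc⁻¹ := (Matrix.inv_eq_right_inv hMcAc).symm
      rw [mul_add, add_mul, mul_one]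
      have e1 : R⁻¹ * R⁻¹ = Ac := by
        rw [hAc, ← hRR, Matrix.mul_inv_rev]
      have e3 : R⁻¹ * (R * Jc * R) * R⁻¹ = Jc := by
        simp only [mul_assoc]
        rw [hRinv', mul_one, ← mul_assoc, hRinv, one_mul]
      have e2 : R⁻¹ * (Complex.I • (R * Jc * R)) * R⁻¹ = Complex.I • Jc := by
        rw [Matrix.mul_smul, Matrix.smul_mul, e3]
      rw [e1, e2]
    have htarget : ((ℏ / 2 : ℝ) : ℂ) • Ac + (Complex.I * ((ℏ / 2 : ℝ) : ℂ)) • Jc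
        = ((ℏ / 2 : ℝ) : ℂ) • (Ac + Complex.I • Jc) := by
      rw [smul_add, smul_smul, mul_comm]
    rw [htarget, ← hform]
    exact posSemidef_smul_ofReal hconj (by positivity)
  · -- backward direction
    intro hpsd
    set μ0 : ℝ := μ ⟨0, hN⟩ with hμ0
    have hse : IsSympEig M μ0 := (hspec μ0).mpr ⟨⟨0, hN⟩, rfl⟩
    obtain ⟨hμ0pos, v, hv0, hveq⟩ := hse
    set w : (Fin N ⊕ Fin N) → ℂ := Mc *ᵥ v with hw
    have hq : (0:ℂ) < star v ⬝ᵥ (Mc *ᵥ v) := hMcPD.dotProduct_mulVec_pos hv0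
    set q : ℂ := star v ⬝ᵥ (Mc *ᵥ v) with hqdef
    have hwv : star w ⬝ᵥ v = q := by
      rw [hw, Matrix.star_mulVec, ← Matrix.dotProduct_mulVec, hMcPD.isHermitian.eq]
    have hnn := hpsd.dotProduct_mulVec_nonneg w
    have hmv : (((ℏ / 2 : ℝ) : ℂ) • Ac + (Complex.I * ((ℏ / 2 : ℝ) : ℂ)) • Jc) *ᵥ w
        = (((ℏ / 2 : ℝ) : ℂ) * (1 - (μ0:ℂ))) • v := by
      rw [Matrix.add_mulVec, Matrix.smul_mulVec, Matrix.smul_mulVec]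
      have h1 : Ac *ᵥ w = v := by
        rw [hw, Matrix.mulVec_mulVec, hAcMc, Matrix.one_mulVec]
      have h2 : Jc *ᵥ w = (Complex.I * (μ0:ℂ)) • v := by
        rw [hw, Matrix.mulVec_mulVec, ← hJMc, hveq]
      rw [h1, h2, smul_smul]
      rw [← add_smul]
      have hsc : ((ℏ / 2 : ℝ) : ℂ) + Complex.I * ((ℏ / 2 : ℝ) : ℂ) * (Complex.I * (μ0:ℂ))
          = ((ℏ / 2 : ℝ) : ℂ) * (1 - (μ0:ℂ)) := by
        linear_combination (((ℏ / 2 : ℝ) : ℂ) * (μ0:ℂ)) * Complex.I_mul_I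
      rw [hsc]
    have hfin : 0 ≤ (((ℏ / 2 : ℝ) : ℂ) * (1 - (μ0:ℂ))) * q := by
      rw [hmv, dotProduct_smul, smul_eq_mul, hwv] at hnn
      exact hnn
    have hqre : 0 < q.re ∧ q.im = 0 := by
      rw [Complex.lt_def] at hq
      exact ⟨by simpa using hq.1, by simpa using hq.2.symm⟩
    have hzre : 0 ≤ ((((ℏ / 2 : ℝ) : ℂ) * (1 - (μ0:ℂ))) * q).re := by
      rw [Complex.le_def] at hfin
      simpa using hfin.1
    have hcast : (((ℏ / 2 : ℝ) : ℂ) * (1 - (μ0:ℂ))) * q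
        = (((ℏ / 2) * (1 - μ0) : ℝ) : ℂ) * q := by push_cast; ring
    rw [hcast, Complex.mul_re, Complex.ofReal_re, Complex.ofReal_im, hqre.2] at hzre
    simp only [zero_mul, mul_zero, sub_zero] at hzre
    by_contra hgt
    push_neg at hgt
    have hneg : ℏ / 2 * (1 - μ0) < 0 := mul_neg_of_pos_of_neg (by linarith) (by linarith)
    nlinarith [mul_neg_of_neg_of_pos hneg hqre.1]
end

section
/- Let ħ > 0 and let Σ be a real symmetric 2N×2N matrix, written in block form Σ = [[A, B],[Bᵀ, D]] with N×N blocks A = Δ(X,X), B = Δ(X,P), D = Δ(P,P). If the complex Hermitian matrix Σ + (iħ/2)J is positive semidefinite, then the Robertson–Schrödinger inequalities hold: for every j, A_{jj}·D_{jj} ≥ (B_{jj})² + ħ²/4, and for all j ≠ k, A_{jj}·D_{kk} ≥ (B_{jk})². -/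
open MeasureTheory Matrix Complex Real
open scoped ComplexOrder

open Matrix Complex
open scoped ComplexOrder

lemma psd_entry_sq_le {n : Type*} [Fintype n] [DecidableEq n]
    {M : Matrix n n ℂ} (hM : M.PosSemidef) (a b : n) (hab : a ≠ b) :
    Complex.normSq (M a b) ≤ (M a a).re * (M b b).re := by
  set c := M a b with hc
  have star_single : ∀ (i0 : n) (v : ℂ), star (Pi.single i0 v : n → ℂ) = Pi.single i0 (star v) := by
    intro i0 v
    funext i
    simp only [Pi.star_apply, Pi.single_apply]
    split <;> simp
  have hba : M b a = (starRingEnd ℂ) c := by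
    have := congrFun (congrFun hM.1 b) a
    simpa [Matrix.conjTranspose_apply] using this.symm
  have haa : 0 ≤ (M a a).re := by
    have h0 := hM.dotProduct_mulVec_nonneg (Pi.single a 1)
    have : star (Pi.single a (1:ℂ)) ⬝ᵥ M *ᵥ (Pi.single a 1) = M a a := by
      rw [star_single, Matrix.mulVec_single]
      simp [single_dotProduct]
    rw [this] at h0
    exact (Complex.le_def.mp h0).1
  have hbb : 0 ≤ (M b b).re := by
    have h0 := hM.dotProduct_mulVec_nonneg (Pi.single b 1)
    have : star (Pi.single b (1:ℂ)) ⬝ᵥ M *ᵥ (Pi.single b 1) = M b b := by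
      rw [star_single, Matrix.mulVec_single]
      simp [single_dotProduct]
    rw [this] at h0
    exact (Complex.le_def.mp h0).1
  have key : ∀ t : ℝ, 0 ≤ (M a a).re * (t * t) + (-(2 * Complex.normSq c)) * t
      + Complex.normSq c * (M b b).re := by
    intro t
    set x : n → ℂ := Pi.single a (t : ℂ) + Pi.single b (-(starRingEnd ℂ) c) with hx
    have h0 := hM.dotProduct_mulVec_nonneg x
    have hstar : star x = Pi.single a ((t:ℝ) : ℂ) + Pi.single b (-c) := by
      rw [hx, star_add, star_single, star_single]
      simp
    have hexp : star x ⬝ᵥ M *ᵥ x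
        = ((t:ℂ) * (M a a * t) + (t:ℂ) * (M a b * (-(starRingEnd ℂ) c)))
          + ((-c) * (M b a * t) + (-c) * (M b b * (-(starRingEnd ℂ) c))) := by
      rw [hstar, hx]
      simp [Matrix.mulVec_add, dotProduct_add, add_dotProduct,
        Matrix.mulVec_single, single_dotProduct, Pi.single_apply, hab, hab.symm]
      ring
    rw [hexp] at h0
    have hre := (Complex.le_def.mp h0).1
    have : ((t:ℂ) * (M a a * t) + (t:ℂ) * (M a b * (-(starRingEnd ℂ) c))
          + ((-c) * (M b a * t) + (-c) * (M b b * (-(starRingEnd ℂ) c)))).re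
        = (M a a).re * (t * t) + (-(2 * Complex.normSq c)) * t
          + Complex.normSq c * (M b b).re := by
      rw [hba, ← hc]
      have h1 : c * (starRingEnd ℂ) c = (Complex.normSq c : ℂ) := Complex.mul_conj c
      have : (t:ℂ) * (M a a * t) + (t:ℂ) * (c * (-(starRingEnd ℂ) c))
          + ((-c) * ((starRingEnd ℂ) c * t) + (-c) * (M b b * (-(starRingEnd ℂ) c)))
          = (M a a) * (t*t) + (-(2 * (Complex.normSq c : ℂ))) * t
            + (Complex.normSq c : ℂ) * M b b := by
        rw [← h1]; ring
      rw [this]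
      simp [Complex.add_re, Complex.mul_re]
    rw [this] at hre
    exact hre
  have hd := discrim_le_zero key
  rw [discrim] at hd
  have hns : 0 ≤ Complex.normSq c := Complex.normSq_nonneg c
  nlinarith [hns, haa, hbb, hd, mul_nonneg haa hbb]

/-- If the covariance matrix `Σ = [[A, B], [Bᵀ, D]]` satisfies `Σ + (iℏ/2)J ≥ 0`, then the
Robertson–Schrödinger inequalities hold: `A_jj D_jj ≥ B_jj² + ℏ²/4` and, for `j ≠ k`,
`A_jj D_kk ≥ B_jk²`. -/
theorem robertson_schrodinger_of_posSemidef
    {N : ℕ} (ℏ : ℝ) (hℏ : 0 < ℏ)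
    (A B D : Matrix (Fin N) (Fin N) ℝ) (hA : A.IsSymm) (hD : D.IsSymm)
    (h : ((Matrix.fromBlocks A B Bᵀ D).map (fun r => (r : ℂ))
        + (Complex.I * ((ℏ / 2 : ℝ) : ℂ)) • (stdJ N).map (fun r => (r : ℂ))).PosSemidef) :
    (∀ j, A j j * D j j ≥ B j j ^ 2 + ℏ ^ 2 / 4) ∧
    (∀ j k, j ≠ k → A j j * D k k ≥ B j k ^ 2) := by
  set M := ((Matrix.fromBlocks A B Bᵀ D).map (fun r => (r : ℂ))
        + (Complex.I * ((ℏ / 2 : ℝ) : ℂ)) • (stdJ N).map (fun r => (r : ℂ))) with hM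
  have hdiag1 : ∀ j, (M (Sum.inl j) (Sum.inl j)).re = A j j := by
    intro j; simp [hM, stdJ]
  have hdiag2 : ∀ k, (M (Sum.inr k) (Sum.inr k)).re = D k k := by
    intro k; simp [hM, stdJ]
  have hoff : ∀ j k, M (Sum.inl j) (Sum.inr k)
      = (B j k : ℂ) + Complex.I * ((ℏ/2 : ℝ) : ℂ) * (if j = k then 1 else 0) := by
    intro j k
    simp [hM, stdJ, Matrix.one_apply]
    split <;> simp
  constructor
  · intro j
    have key := psd_entry_sq_le h (Sum.inl j) (Sum.inr j) (by simp)
    rw [hoff j j, hdiag1, hdiag2] at key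
    simp only [if_pos rfl, mul_one] at key
    rw [Complex.normSq_apply] at key
    simp at key
    nlinarith [key]
  · intro j k hjk
    have key := psd_entry_sq_le h (Sum.inl j) (Sum.inr k) (by simp)
    rw [hoff j k, hdiag1, hdiag2] at key
    simp only [if_neg hjk, mul_zero, add_zero] at key
    rw [Complex.normSq_apply] at key
    simp at key
    nlinarith [key]
end

section
/- Let ħ > 0 and let Σ = [[a, c],[c, b]] be a real symmetric 2×2 matrix with a ≥ 0. Then the complex Hermitian matrix Σ + (iħ/2)J is positive semidefinite if and only if a·b ≥ c² + ħ²/4 (the Robertson–Schrödinger inequality for one degree of freedom). -/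
open MeasureTheory Matrix Complex Real
open scoped ComplexOrder

lemma psd_two_aux (a b : ℝ) (z : ℂ) :
    (!![(a : ℂ), z; (starRingEnd ℂ) z, (b : ℂ)]).PosSemidef ↔
      0 ≤ a ∧ 0 ≤ b ∧ Complex.normSq z ≤ a * b := by
  constructor
  · intro h
    have ha : 0 ≤ a := by
      have := h.re_dotProduct_nonneg ![1, 0]
      simpa [dotProduct, Matrix.mulVec, Fin.sum_univ_two] using this
    have hb : 0 ≤ b := by
      have := h.re_dotProduct_nonneg ![0, 1]
      simpa [dotProduct, Matrix.mulVec, Fin.sum_univ_two] using this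
    refine ⟨ha, hb, ?_⟩
    have key : ∀ t : ℝ, 0 ≤ a * t ^ 2 * Complex.normSq z - 2 * t * Complex.normSq z + b := by
      intro t
      have := h.re_dotProduct_nonneg ![(-(t : ℂ)) * z, 1]
      have e : (RCLike.re ((star ![(-(t : ℂ)) * z, 1]) ⬝ᵥ
          ((!![(a : ℂ), z; (starRingEnd ℂ) z, (b : ℂ)]) *ᵥ ![(-(t : ℂ)) * z, 1])) : ℝ)
          = a * t ^ 2 * Complex.normSq z - 2 * t * Complex.normSq z + b := by
        simp [dotProduct, Matrix.mulVec, Fin.sum_univ_two, Complex.normSq_apply,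
          Complex.add_re, Complex.mul_re, Complex.mul_im]
        ring
      rw [e] at this
      exact this
    rcases eq_or_lt_of_le ha with heq | hpos
    · -- a = 0
      by_contra hcon
      push_neg at hcon
      have hz : 0 < Complex.normSq z := by
        have := Complex.normSq_nonneg z
        nlinarith
      have hk := key ((|b| + 1) / (2 * Complex.normSq z))
      rw [← heq] at hk
      have hzne : Complex.normSq z ≠ 0 := ne_of_gt hz
      have e : (0 : ℝ) * ((|b| + 1) / (2 * Complex.normSq z)) ^ 2 * Complex.normSq z
          - 2 * ((|b| + 1) / (2 * Complex.normSq z)) * Complex.normSq z + b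
          = b - (|b| + 1) := by
        field_simp
        ring
      rw [e] at hk
      nlinarith [le_abs_self b]
    · have hk := key (1 / a)
      have ha' : a ≠ 0 := ne_of_gt hpos
      have e : a * (1 / a) ^ 2 * Complex.normSq z - 2 * (1 / a) * Complex.normSq z + b
          = (a * b - Complex.normSq z) / a := by
        field_simp
        ring
      rw [e] at hk
      have h2 := mul_nonneg hk hpos.le
      rw [div_mul_cancel₀ _ ha'] at h2
      linarith
  · rintro ⟨ha, hb, hab⟩
    rw [Matrix.posSemidef_iff_dotProduct_mulVec]
    constructor
    · ext i j
      fin_cases i <;> fin_cases j <;>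
        simp [Matrix.conjTranspose_apply]
    · intro x
      have hq : (star x) ⬝ᵥ ((!![(a : ℂ), z; (starRingEnd ℂ) z, (b : ℂ)]) *ᵥ x)
          = ((a * Complex.normSq (x 0) + b * Complex.normSq (x 1)
              + 2 * (z * (starRingEnd ℂ) (x 0) * (x 1)).re : ℝ) : ℂ) := by
        simp [dotProduct, Matrix.mulVec, Fin.sum_univ_two, Complex.ext_iff,
          Complex.normSq_apply, Complex.add_re, Complex.add_im, Complex.mul_re, Complex.mul_im]
        constructor <;> ring
      rw [hq]
      rw [Complex.le_def]
      refine ⟨?_, by simp⟩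
      simp only [Complex.zero_re, Complex.ofReal_re]
      set u := Complex.normSq (x 0) with hu
      set v := Complex.normSq (x 1) with hv
      set w := z * (starRingEnd ℂ) (x 0) * (x 1) with hw
      have hu0 : 0 ≤ u := Complex.normSq_nonneg _
      have hv0 : 0 ≤ v := Complex.normSq_nonneg _
      have hw2 : w.re ^ 2 ≤ Complex.normSq z * u * v := by
        have h1 : w.re ^ 2 ≤ Complex.normSq w := by
          rw [Complex.normSq_apply]
          nlinarith [sq_nonneg w.im]
        have h2 : Complex.normSq w = Complex.normSq z * u * v := by
          simp [hw, hu, hv, Complex.normSq_mul]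
        linarith [h1, h2.le]
      set r := w.re
      have huv : 0 ≤ u * v := mul_nonneg hu0 hv0
      have h3 : 4 * r ^ 2 ≤ 4 * (a * b) * (u * v) := by
        nlinarith [mul_nonneg (sub_nonneg.2 hab) huv]
      have h4 : 4 * r ^ 2 ≤ (a * u + b * v) ^ 2 := by
        nlinarith [sq_nonneg (a * u - b * v)]
      have h5 : 0 ≤ a * u + b * v :=
        add_nonneg (mul_nonneg ha hu0) (mul_nonneg hb hv0)
      nlinarith [h4, h5]

/-- For one degree of freedom (`N = 1`), with `Σ = [[a, c], [c, b]]` real symmetric and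
`a ≥ 0`, the complex Hermitian matrix `Σ + (iℏ/2)J` (where `J = [[0,1],[-1,0]]`) is
positive semidefinite iff the Robertson–Schrödinger inequality `a b ≥ c² + ℏ²/4` holds. -/
theorem posSemidef_iff_robertson_schrodinger_one_dof
    (ℏ : ℝ) (hℏ : 0 < ℏ) (a b c : ℝ) (ha : 0 ≤ a) :
    ((!![a, c; c, b] : Matrix (Fin 2) (Fin 2) ℝ).map (fun r => (r : ℂ))
        + (Complex.I * ((ℏ / 2 : ℝ) : ℂ)) •
          (!![0, 1; -1, 0] : Matrix (Fin 2) (Fin 2) ℝ).map (fun r => (r : ℂ))).PosSemidef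
      ↔ a * b ≥ c ^ 2 + ℏ ^ 2 / 4 := by
  set z : ℂ := (c : ℂ) + Complex.I * ((ℏ / 2 : ℝ) : ℂ) with hz
  have hM : ((!![a, c; c, b] : Matrix (Fin 2) (Fin 2) ℝ).map (fun r => (r : ℂ))
        + (Complex.I * ((ℏ / 2 : ℝ) : ℂ)) •
          (!![0, 1; -1, 0] : Matrix (Fin 2) (Fin 2) ℝ).map (fun r => (r : ℂ)))
      = !![(a : ℂ), z; (starRingEnd ℂ) z, (b : ℂ)] := by
    ext i j
    fin_cases i <;> fin_cases j <;>
      simp [hz, Complex.ext_iff] <;> ring_nf <;> simp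
  rw [hM, psd_two_aux]
  have hnz : Complex.normSq z = c ^ 2 + ℏ ^ 2 / 4 := by
    simp [hz, Complex.normSq_apply]
    ring
  rw [hnz]
  constructor
  · rintro ⟨_, _, h⟩
    exact h
  · intro h
    refine ⟨ha, ?_, h⟩
    nlinarith [sq_nonneg c, sq_nonneg ℏ]
end

section
/- (Williamson's theorem.) Let M be a real symmetric positive-definite 2N×2N matrix. Then there exist a real symplectic 2N×2N matrix S and positive real numbers μ_1, …, μ_N such that M = Sᵀ D S, where D is the 2N×2N diagonal matrix D = diag(μ_1, …, μ_N, μ_1, …, μ_N). -/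
open MeasureTheory Matrix Complex Real

section Aux

open Polynomial

variable {N : ℕ}

/-- Hermitian orthogonality for distinct real eigenvalues. -/
private lemma herm_orth {n : Type*} [Fintype n] (H : Matrix n n ℂ) (hH : H.IsHermitian)
    (v w : n → ℂ) (a b : ℝ)
    (hv : H *ᵥ v = (a:ℂ) • v) (hw : H *ᵥ w = (b:ℂ) • w) (hab : a ≠ b) :
    star v ⬝ᵥ w = 0 := by
  have h1 : star v ⬝ᵥ (H *ᵥ w) = (b:ℂ) * (star v ⬝ᵥ w) := by
    rw [hw, dotProduct_smul]; rfl
  have h2 : star v ⬝ᵥ (H *ᵥ w) = (a:ℂ) * (star v ⬝ᵥ w) := by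
    rw [Matrix.dotProduct_mulVec]
    have : star v ᵥ* H = (a:ℂ) • star v := by
      have := congrArg star hv
      rw [Matrix.star_mulVec, hH.eq] at this
      rw [this]
      ext i
      simp [Complex.conj_ofReal]
    rw [this, smul_dotProduct]; rfl
  have h3 : ((a:ℂ) - b) * (star v ⬝ᵥ w) = 0 := by rw [sub_mul, ← h1, ← h2, sub_self]
  rcases mul_eq_zero.mp h3 with h | h
  · exfalso; apply hab
    have : (a:ℂ) = b := by linear_combination h
    exact_mod_cast this
  · exact h

private lemma dot_re_im {n : Type*} [Fintype n] (v w : n → ℂ) (r : ℝ)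
    (h1 : star v ⬝ᵥ w = (r:ℂ)) (h2 : v ⬝ᵥ w = 0) :
    (∑ i, (v i).re * (w i).re = r/2) ∧ (∑ i, (v i).im * (w i).im = r/2)
    ∧ (∑ i, (v i).re * (w i).im = 0) ∧ (∑ i, (v i).im * (w i).re = 0) := by
  have e1 := congrArg Complex.re h1
  have e2 := congrArg Complex.im h1
  have e3 := congrArg Complex.re h2
  have e4 := congrArg Complex.im h2
  simp only [dotProduct, Pi.star_apply, Complex.re_sum, Complex.im_sum,
    Complex.mul_re, Complex.mul_im, RCLike.star_def, Complex.conj_re, Complex.conj_im,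
    Complex.ofReal_re, Complex.ofReal_im, neg_mul, sub_neg_eq_add] at e1 e2 e3 e4
  simp only [Finset.sum_add_distrib, Finset.sum_sub_distrib, Finset.sum_neg_distrib,
    Complex.zero_re, Complex.zero_im] at e1 e2 e3 e4
  refine ⟨by linarith, by linarith, by linarith, by linarith⟩

private lemma mulvec_re_im {n : Type*} [Fintype n] (K : Matrix n n ℝ) (v : n → ℂ) (c : ℝ)
    (h : (K.map (Complex.ofReal ·)) *ᵥ v = (-(Complex.I) * (c:ℂ)) • v) :
    (∀ i, ∑ k, K i k * (v k).re = c * (v i).im) ∧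
    (∀ i, ∑ k, K i k * (v k).im = -c * (v i).re) := by
  constructor
  · intro i
    have e := congrArg Complex.re (congrFun h i)
    simp only [Matrix.mulVec, dotProduct, Matrix.map_apply, Pi.smul_apply,
      smul_eq_mul, Complex.re_sum, Complex.mul_re, Complex.mul_im, Complex.ofReal_re,
      Complex.ofReal_im, Complex.neg_re, Complex.neg_im, Complex.I_re, Complex.I_im,
      zero_mul, mul_zero, sub_zero, zero_sub, neg_zero, neg_mul, neg_neg, zero_add] at e
    have e' : ∑ x, K i x * (v x).re = 1 * c * (v i).im := by simpa using e
    rw [e']; ring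
  · intro i
    have e := congrArg Complex.im (congrFun h i)
    simp only [Matrix.mulVec, dotProduct, Matrix.map_apply, Pi.smul_apply,
      smul_eq_mul, Complex.im_sum, Complex.mul_re, Complex.mul_im, Complex.ofReal_re,
      Complex.ofReal_im, Complex.neg_re, Complex.neg_im, Complex.I_re, Complex.I_im,
      zero_mul, mul_zero, sub_zero, zero_sub, neg_zero, neg_mul, neg_neg, zero_add] at e
    have e' : ∑ x, K i x * (v x).im = -(1 * c * (v i).re) := by simpa using e
    rw [e']; ring

/-- Normal form of a nonsingular real skew-symmetric matrix. -/
private lemma skew_normal_form (K : Matrix (Fin N ⊕ Fin N) (Fin N ⊕ Fin N) ℝ)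
    (hskew : Kᵀ = -K) (hdet : K.det ≠ 0) :
    ∃ (R : Matrix (Fin N ⊕ Fin N) (Fin N ⊕ Fin N) ℝ) (c : Fin N → ℝ),
      (∀ j, 0 < c j) ∧ Rᵀ * R = 1 ∧
      Rᵀ * K * R = Matrix.fromBlocks 0 (Matrix.diagonal c) (-(Matrix.diagonal c)) 0 := by
  classical
  set Kc : Matrix (Fin N ⊕ Fin N) (Fin N ⊕ Fin N) ℂ := K.map (Complex.ofReal ·) with hKc
  set H : Matrix (Fin N ⊕ Fin N) (Fin N ⊕ Fin N) ℂ := Complex.I • Kc with hHdef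
  have hH : H.IsHermitian := by
    unfold Matrix.IsHermitian
    rw [hHdef, conjTranspose_smul]
    have h1 : Kcᴴ = (Kᵀ).map (Complex.ofReal ·) := by
      ext i j
      simp [hKc, conjTranspose_apply]
    rw [h1, hskew]
    ext i j
    simp [hKc, Matrix.map]
  have hconj : H.map (starRingEnd ℂ) = -H := by
    ext i j
    simp [hHdef, hKc, Matrix.map]
  set d : (Fin N ⊕ Fin N) → ℝ := hH.eigenvalues with hd
  -- eigenvalues are nonzero
  have hdetH : H.det ≠ 0 := by
    rw [hHdef, Matrix.det_smul]
    apply mul_ne_zero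
    · apply pow_ne_zero; simp [Complex.I_ne_zero]
    · have : Kc.det = (K.det : ℂ) := by
        rw [hKc]
        exact (RingHom.map_det Complex.ofRealHom K).symm
      rw [this]
      exact_mod_cast hdet
  have hdne : ∀ i, d i ≠ 0 := by
    intro i hi
    apply hdetH
    rw [hH.det_eq_prod_eigenvalues]
    apply Finset.prod_eq_zero (Finset.mem_univ i)
    rw [← hd, hi]; simp
  -- pairing of eigenvalues
  have hpair : ∀ t : ℝ, ∏ i, (t - d i) = ∏ i, (t + d i) := by
    intro t
    set U : Matrix (Fin N ⊕ Fin N) (Fin N ⊕ Fin N) ℂ :=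
      (hH.eigenvectorUnitary : Matrix (Fin N ⊕ Fin N) (Fin N ⊕ Fin N) ℂ) with hU
    have hUU : U * star U = 1 := (Matrix.mem_unitaryGroup_iff).mp hH.eigenvectorUnitary.2
    have hSU : star U * U = 1 := (Matrix.mem_unitaryGroup_iff').mp hH.eigenvectorUnitary.2
    have hspec := hH.spectral_theorem
    have key : ∀ (A D : Matrix (Fin N ⊕ Fin N) (Fin N ⊕ Fin N) ℂ), A = U * D * star U →
        Matrix.det ((t:ℂ) • 1 - A) = Matrix.det ((t:ℂ) • 1 - D) := by
      intro A D hD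
      have : (t:ℂ) • 1 - A = U * ((t:ℂ) • 1 - D) * star U := by
        rw [Matrix.mul_sub, Matrix.sub_mul, hD]
        congr 1
        rw [Matrix.mul_smul, Matrix.mul_one, Matrix.smul_mul, hUU]
      rw [this, Matrix.det_mul, Matrix.det_mul, mul_comm, ← mul_assoc, ← Matrix.det_mul, hSU]
      simp
    have hdiagdet : ∀ (v : (Fin N ⊕ Fin N) → ℝ),
        Matrix.det ((t:ℂ) • 1 - Matrix.diagonal (fun i => (v i : ℂ))) = ∏ i, ((t:ℂ) - v i) := by
      intro v
      rw [Matrix.smul_one_eq_diagonal, Matrix.diagonal_sub, Matrix.det_diagonal]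
    have h1 : Matrix.det ((t:ℂ) • 1 - H) = ∏ i, ((t:ℂ) - d i) := by
      rw [key _ _ hspec]; exact hdiagdet _
    have hspec2 : -H = U * (-(Matrix.diagonal (RCLike.ofReal ∘ hH.eigenvalues))) * star U := by
      simp only [Matrix.mul_neg, Matrix.neg_mul, neg_inj]; exact hspec
    have h2 : Matrix.det ((t:ℂ) • 1 + H) = ∏ i, ((t:ℂ) + d i) := by
      have hk := key _ _ hspec2
      rw [sub_neg_eq_add] at hk
      rw [hk]
      have hneg : -(Matrix.diagonal (RCLike.ofReal ∘ hH.eigenvalues))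
          = Matrix.diagonal (fun i => ((-d i : ℝ) : ℂ)) := by
        ext i j
        by_cases hij : i = j <;> simp [hij, hd]
      rw [hneg, hdiagdet]
      simp [sub_neg_eq_add]
    have hconj' : ∀ i j, starRingEnd ℂ (H i j) = -H i j := fun i j =>
      congrFun (congrFun hconj i) j
    have h3 : Matrix.det ((t:ℂ) • 1 + H) = starRingEnd ℂ (Matrix.det ((t:ℂ) • 1 - H)) := by
      have hmap : ((t:ℂ) • 1 - H).map (starRingEnd ℂ) = (t:ℂ) • 1 + H := by
        ext i j
        simp only [Matrix.map_apply, Matrix.sub_apply, Matrix.add_apply, map_sub, hconj',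
          Matrix.smul_apply, smul_eq_mul]
        by_cases hij : i = j <;> simp [hij, Matrix.one_apply, Complex.conj_ofReal, sub_neg_eq_add]
      rw [RingHom.map_det, ← hmap]
      rfl
    have hC : ∏ i, ((t:ℂ) - d i) = ∏ i, ((t:ℂ) + d i) := by
      rw [← h1, ← h2, h3, h1, map_prod]
      congr 1
      funext i
      rw [map_sub]
      congr 1 <;> simp [Complex.conj_ofReal]
    push_cast at hC
    exact_mod_cast hC
  -- multiset pairing
  have hms : Multiset.map d Finset.univ.val = Multiset.map (fun i => -d i) Finset.univ.val := by
    have hpq : (∏ i, (X - C (d i)) : ℝ[X]) = ∏ i, (X - C (-d i)) := by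
      apply Polynomial.funext
      intro t
      simp only [eval_prod, eval_sub, eval_X, eval_C]
      simpa [sub_neg_eq_add] using hpair t
    have h1 : ((Multiset.map d Finset.univ.val).map (fun a => X - C a)).prod
        = (∏ i, (X - C (d i)) : ℝ[X]) := by
      rw [Finset.prod_eq_multiset_prod, Multiset.map_map]; rfl
    have h2 : ((Multiset.map (fun i => -d i) Finset.univ.val).map (fun a => X - C a)).prod
        = (∏ i, (X - C (-d i)) : ℝ[X]) := by
      rw [Finset.prod_eq_multiset_prod, Multiset.map_map]; rfl
    have := congrArg Polynomial.roots (h1.trans (hpq.trans h2.symm))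
    rwa [Polynomial.roots_multiset_prod_X_sub_C, Polynomial.roots_multiset_prod_X_sub_C] at this
  -- counting
  have hcard : (Finset.univ.filter (fun i => 0 < d i)).card = N := by
    have hcount := congrArg (Multiset.countP (fun r => 0 < r)) hms
    rw [Multiset.countP_map, Multiset.countP_map] at hcount
    have key : (Finset.univ.filter (fun i => 0 < d i)).card
        = (Finset.univ.filter (fun i => 0 < -d i)).card := hcount
    have hsplit : (Finset.univ.filter (fun i => 0 < d i)).card
        + (Finset.univ.filter (fun i => ¬ 0 < d i)).card = Fintype.card (Fin N ⊕ Fin N) :=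
      Finset.card_filter_add_card_filter_not _
    have heq : (Finset.univ.filter (fun i => ¬ 0 < d i))
        = (Finset.univ.filter (fun i => 0 < -d i)) := by
      ext i
      simp only [Finset.mem_filter, Finset.mem_univ, true_and]
      constructor
      · intro hnp; push_neg at hnp
        rcases lt_or_eq_of_le hnp with h | h
        · linarith
        · exact absurd h (hdne i)
      · intro h; linarith
    rw [heq, ← key] at hsplit
    simp only [Fintype.card_sum, Fintype.card_fin] at hsplit
    omega
  -- the selection of positive indices
  set p : Fin N → (Fin N ⊕ Fin N) := fun j => ((Finset.equivFinOfCardEq hcard).symm j : _) with hp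
  have hppos : ∀ j, 0 < d (p j) := by
    intro j
    have := ((Finset.equivFinOfCardEq hcard).symm j).2
    simpa using (Finset.mem_filter.mp this).2
  have hpinj : Function.Injective p := by
    intro a b hab
    have := Subtype.coe_injective hab
    exact (Finset.equivFinOfCardEq hcard).symm.injective this
  -- eigenvectors
  set u : (Fin N ⊕ Fin N) → (Fin N ⊕ Fin N) → ℂ := fun i => ⇑(hH.eigenvectorBasis i) with hu
  have horm : ∀ i j, star (u i) ⬝ᵥ u j = if i = j then 1 else 0 := by
    intro i j
    have := hH.eigenvectorBasis.orthonormal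
    rw [orthonormal_iff_ite] at this
    have h := this i j
    rwa [EuclideanSpace.inner_eq_star_dotProduct, dotProduct_comm] at h
  have heig : ∀ j, H *ᵥ u j = (d j : ℂ) • u j := by
    intro j
    have := hH.mulVec_eigenvectorBasis j
    convert this using 1
    rw [hd, hu]; exact (RCLike.real_smul_eq_coe_smul (K := ℂ) _ _).symm
  have hT : Hᵀ = -H := by
    ext i j
    have h1 : (starRingEnd ℂ) (H j i) = H i j := congrFun (congrFun hH.eq i) j
    have h2 : (starRingEnd ℂ) (H i j) = -H i j := congrFun (congrFun hconj i) j
    have : H j i = (starRingEnd ℂ) ((starRingEnd ℂ) (H j i)) := by simp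
    rw [Matrix.transpose_apply, Matrix.neg_apply, this, h1, h2]
  have hstar : ∀ i, H *ᵥ star (u i) = (-(d i : ℂ)) • star (u i) := by
    intro i
    have h := congrArg star (heig i)
    rw [Matrix.star_mulVec, hH.eq, star_smul] at h
    have h3 : H *ᵥ star (u i) = -(star (u i) ᵥ* H) := by
      rw [← Matrix.mulVec_transpose, hT, Matrix.neg_mulVec, neg_neg]
    rw [h3, h, ← neg_smul]
    congr 1
    simp [Complex.conj_ofReal]
  -- restrict to positive indices
  set w : Fin N → (Fin N ⊕ Fin N) → ℂ := fun j => u (p j) with hw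
  set c : Fin N → ℝ := fun j => d (p j) with hc
  have hcpos : ∀ j, 0 < c j := fun j => hppos j
  have C1 : ∀ a b, star (w a) ⬝ᵥ w b = if a = b then 1 else 0 := by
    intro a b
    rw [hw]
    simp only []
    rw [horm (p a) (p b)]
    by_cases hab : a = b
    · simp [hab]
    · rw [if_neg (fun h => hab (hpinj h)), if_neg hab]
  have C2 : ∀ a b, w a ⬝ᵥ w b = 0 := by
    intro a b
    have := herm_orth H hH (star (w a)) (w b) (-(c a)) (c b)
      (by push_cast; exact hstar (p a)) (heig (p b)) (by have := hcpos a; have := hcpos b; linarith)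
    rwa [star_star] at this
  have C3 : ∀ j, Kc *ᵥ w j = (-(Complex.I) * (c j : ℂ)) • w j := by
    intro j
    have h := heig (p j)
    rw [hHdef, Matrix.smul_mulVec] at h
    have := congrArg (fun z => (-(Complex.I)) • z) h
    simp only [smul_smul] at this
    rw [show (-(Complex.I)) * Complex.I = 1 by simp [Complex.I_mul_I], one_smul] at this
    rw [this]
  have C1R : ∀ a b, star (w a) ⬝ᵥ w b = (((if a = b then (1:ℝ) else 0) : ℝ) : ℂ) := by
    intro a b
    rw [C1]
    by_cases h : a = b <;> simp [h]
  have C3R : ∀ j, (K.map (Complex.ofReal ·)) *ᵥ w j = (-(Complex.I) * (c j : ℂ)) • w j := by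
    intro j
    rw [← hKc]; exact C3 j
  -- the real orthogonal matrix
  set R : Matrix (Fin N ⊕ Fin N) (Fin N ⊕ Fin N) ℝ :=
    Matrix.of fun i k => Sum.elim (fun a => Real.sqrt 2 * (w a i).im)
      (fun a => Real.sqrt 2 * (w a i).re) k with hR
  set B : Matrix (Fin N ⊕ Fin N) (Fin N ⊕ Fin N) ℝ :=
    Matrix.fromBlocks 0 (Matrix.diagonal c) (-(Matrix.diagonal c)) 0 with hB
  have h2sum : ∀ (f g : (Fin N ⊕ Fin N) → ℝ),
      ∑ i, (Real.sqrt 2 * f i) * (Real.sqrt 2 * g i) = 2 * ∑ i, f i * g i := by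
    intro f g
    rw [Finset.mul_sum]
    apply Finset.sum_congr rfl
    intro i _
    rw [show (Real.sqrt 2 * f i) * (Real.sqrt 2 * g i)
      = (Real.sqrt 2 * Real.sqrt 2) * (f i * g i) from by ring,
      Real.mul_self_sqrt (by norm_num : (0:ℝ) ≤ 2)]
  have hRTR : Rᵀ * R = 1 := by
    ext k l
    rw [Matrix.mul_apply]
    simp only [Matrix.transpose_apply, hR, Matrix.of_apply]
    cases k with
    | inl a =>
      cases l with
      | inl b =>
        simp only [Sum.elim_inl]
        rw [h2sum, (dot_re_im (w a) (w b) _ (C1R a b) (C2 a b)).2.1]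
        by_cases h : a = b <;> simp [h, Matrix.one_apply]
      | inr b =>
        simp only [Sum.elim_inl, Sum.elim_inr]
        rw [h2sum, (dot_re_im (w a) (w b) _ (C1R a b) (C2 a b)).2.2.2]
        simp [Matrix.one_apply]
    | inr a =>
      cases l with
      | inl b =>
        simp only [Sum.elim_inl, Sum.elim_inr]
        rw [h2sum, (dot_re_im (w a) (w b) _ (C1R a b) (C2 a b)).2.2.1]
        simp [Matrix.one_apply]
      | inr b =>
        simp only [Sum.elim_inr]
        rw [h2sum, (dot_re_im (w a) (w b) _ (C1R a b) (C2 a b)).1]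
        by_cases h : a = b <;> simp [h, Matrix.one_apply]
  have hdiagsum : ∀ (f : Fin N → ℝ) (j : Fin N),
      ∑ a, f a * (Matrix.diagonal c) a j = f j * c j := by
    intro f j
    rw [Finset.sum_eq_single j]
    · rw [Matrix.diagonal_apply_eq]
    · intro a _ ha
      rw [Matrix.diagonal_apply_ne c ha, mul_zero]
    · intro h; exact absurd (Finset.mem_univ j) h
  have hKR : K * R = R * B := by
    ext i k
    rw [Matrix.mul_apply, Matrix.mul_apply]
    cases k with
    | inl j =>
      have hmul2 := (mulvec_re_im K (w j) (c j) (C3R j)).2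
      have hlhs : ∑ m, K i m * R m (Sum.inl j) = Real.sqrt 2 * (-(c j) * (w j i).re) := by
        simp only [hR, Matrix.of_apply, Sum.elim_inl]
        rw [show (∑ m, K i m * (Real.sqrt 2 * (w j m).im))
            = Real.sqrt 2 * ∑ m, K i m * (w j m).im from by
          rw [Finset.mul_sum]; exact Finset.sum_congr rfl (fun m _ => by ring), hmul2 i]
      have hrhs : ∑ m, R i m * B m (Sum.inl j) = Real.sqrt 2 * (-(c j) * (w j i).re) := by
        rw [Fintype.sum_sum_type]
        simp only [hR, hB, Matrix.of_apply, Sum.elim_inl, Sum.elim_inr,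
          Matrix.fromBlocks_apply₁₁, Matrix.fromBlocks_apply₂₁, Matrix.zero_apply, mul_zero,
          Finset.sum_const_zero, zero_add, Matrix.neg_apply, mul_neg]
        rw [Finset.sum_neg_distrib, hdiagsum (fun a => Real.sqrt 2 * (w a i).re) j]
        ring
      rw [hlhs, hrhs]
    | inr j =>
      have hmul1 := (mulvec_re_im K (w j) (c j) (C3R j)).1
      have hlhs : ∑ m, K i m * R m (Sum.inr j) = Real.sqrt 2 * (c j * (w j i).im) := by
        simp only [hR, Matrix.of_apply, Sum.elim_inr]
        rw [show (∑ m, K i m * (Real.sqrt 2 * (w j m).re))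
            = Real.sqrt 2 * ∑ m, K i m * (w j m).re from by
          rw [Finset.mul_sum]; exact Finset.sum_congr rfl (fun m _ => by ring), hmul1 i]
      have hrhs : ∑ m, R i m * B m (Sum.inr j) = Real.sqrt 2 * (c j * (w j i).im) := by
        rw [Fintype.sum_sum_type]
        simp only [hR, hB, Matrix.of_apply, Sum.elim_inl, Sum.elim_inr,
          Matrix.fromBlocks_apply₁₂, Matrix.fromBlocks_apply₂₂, Matrix.zero_apply, mul_zero,
          Finset.sum_const_zero, add_zero]
        rw [hdiagsum (fun a => Real.sqrt 2 * (w a i).im) j]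
        ring
      rw [hlhs, hrhs]
  refine ⟨R, c, hcpos, hRTR, ?_⟩
  calc Rᵀ * K * R = Rᵀ * (K * R) := by rw [Matrix.mul_assoc]
    _ = Rᵀ * (R * B) := by rw [hKR]
    _ = (Rᵀ * R) * B := by rw [Matrix.mul_assoc]
    _ = B := by rw [hRTR, Matrix.one_mul]

open scoped MatrixOrder in
private lemma psd_sqrt_exists {n : Type*} [Fintype n] [DecidableEq n] (M : Matrix n n ℝ)
    (hM : M.PosSemidef) : ∃ L : Matrix n n ℝ, L.PosSemidef ∧ L * L = M :=
  ⟨CFC.sqrt M, (CFC.sqrt_nonneg M).posSemidef, CFC.sqrt_mul_sqrt_self M hM.nonneg⟩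

end Aux

/-- Williamson's theorem: every real symmetric positive definite `2N×2N` matrix `M` can be
written as `M = Sᵀ D S` with `S` symplectic and `D = diag(μ₁,…,μ_N,μ₁,…,μ_N)`, `μ_j > 0`. -/
theorem williamson_diagonalization
    {N : ℕ} (M : Matrix (Fin N ⊕ Fin N) (Fin N ⊕ Fin N) ℝ) (hM : M.PosDef) :
    ∃ (S : Matrix (Fin N ⊕ Fin N) (Fin N ⊕ Fin N) ℝ) (μ : Fin N → ℝ),
      (∀ i, 0 < μ i) ∧ Sᵀ * stdJ N * S = stdJ N ∧
      M = Sᵀ * Matrix.fromBlocks (Matrix.diagonal μ) 0 0 (Matrix.diagonal μ) * S := by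
  classical
  obtain ⟨L, hLps0, hLL0⟩ := psd_sqrt_exists M hM.posSemidef
  have hLps : L.PosSemidef := hLps0
  have hLsym : Lᵀ = L := by
    have h := hLps.1
    ext i j
    have := congrFun (congrFun h i) j
    simpa [Matrix.conjTranspose_apply] using this
  have hLL : L * L = M := hLL0
  have hdetL : IsUnit L.det := by
    rw [isUnit_iff_ne_zero]
    intro h0
    have : L.det * L.det = M.det := by rw [← Matrix.det_mul, hLL]
    rw [h0, mul_zero] at this
    exact (ne_of_gt hM.det_pos) this.symm
  have hLinv : L * L⁻¹ = 1 := Matrix.mul_nonsing_inv _ hdetL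
  have hLinv' : L⁻¹ * L = 1 := Matrix.nonsing_inv_mul _ hdetL
  have hLisym : (L⁻¹)ᵀ = L⁻¹ := by rw [Matrix.transpose_nonsing_inv, hLsym]
  have hJt : (stdJ N)ᵀ = -(stdJ N) := by
    rw [stdJ, Matrix.fromBlocks_transpose]
    simp [Matrix.fromBlocks_neg]
  have hJJ : stdJ N * stdJ N = -1 := by
    rw [stdJ, Matrix.fromBlocks_multiply]
    simp [← Matrix.fromBlocks_one, Matrix.fromBlocks_neg]
  have hdetJ : (stdJ N).det ≠ 0 := by
    intro h0
    have h1 := congrArg Matrix.det hJJ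
    rw [Matrix.det_mul, h0, mul_zero] at h1
    have heven : Even (Fintype.card (Fin N ⊕ Fin N)) := ⟨N, by simp [Fintype.card_sum]⟩
    have hd1 : Matrix.det (-1 : Matrix (Fin N ⊕ Fin N) (Fin N ⊕ Fin N) ℝ) = 1 := by
      rw [Matrix.det_neg, Matrix.det_one, mul_one, Even.neg_one_pow heven]
    rw [hd1] at h1
    exact one_ne_zero h1.symm
  set K : Matrix (Fin N ⊕ Fin N) (Fin N ⊕ Fin N) ℝ := L⁻¹ * stdJ N * L⁻¹ with hKdef
  have hskew : Kᵀ = -K := by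
    rw [hKdef, Matrix.transpose_mul, Matrix.transpose_mul, hLisym, hJt]
    simp [Matrix.neg_mul, Matrix.mul_neg, Matrix.mul_assoc]
  have hdetK : K.det ≠ 0 := by
    rw [hKdef, Matrix.det_mul, Matrix.det_mul]
    have hdLi : L⁻¹.det ≠ 0 := by
      rw [Matrix.det_nonsing_inv, Ring.inverse_eq_inv]
      exact inv_ne_zero (isUnit_iff_ne_zero.mp hdetL)
    exact mul_ne_zero (mul_ne_zero hdLi hdetJ) hdLi
  obtain ⟨R, c, hcpos, hRTR, hRKR⟩ := skew_normal_form K hskew hdetK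
  have hRRT : R * Rᵀ = 1 := mul_eq_one_comm.mp hRTR
  set e : Fin N → ℝ := fun j => Real.sqrt (c j) with he
  set E : Matrix (Fin N ⊕ Fin N) (Fin N ⊕ Fin N) ℝ :=
    Matrix.fromBlocks (Matrix.diagonal e) 0 0 (Matrix.diagonal e) with hE
  set μ : Fin N → ℝ := fun j => (c j)⁻¹ with hμ
  have hee : ∀ j, e j * e j = c j := fun j => Real.mul_self_sqrt (le_of_lt (hcpos j))
  have hEt : Eᵀ = E := by
    rw [hE, Matrix.fromBlocks_transpose]
    simp [Matrix.diagonal_transpose]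
  have h1 : Matrix.diagonal e * Matrix.diagonal μ * Matrix.diagonal e
      = (1 : Matrix (Fin N) (Fin N) ℝ) := by
    rw [Matrix.diagonal_mul_diagonal, Matrix.diagonal_mul_diagonal, ← Matrix.diagonal_one,
      Matrix.diagonal_eq_diagonal_iff]
    intro j
    have h' : e j * μ j * e j = (e j * e j) * μ j := by ring
    rw [h', hee j, hμ]
    exact mul_inv_cancel₀ (ne_of_gt (hcpos j))
  have h2 : Matrix.diagonal e * Matrix.diagonal e = Matrix.diagonal c := by
    rw [Matrix.diagonal_mul_diagonal, Matrix.diagonal_eq_diagonal_iff]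
    exact hee
  set D : Matrix (Fin N ⊕ Fin N) (Fin N ⊕ Fin N) ℝ :=
    Matrix.fromBlocks (Matrix.diagonal μ) 0 0 (Matrix.diagonal μ) with hD
  have hEDE : E * D * E = 1 := by
    rw [hE, hD, Matrix.fromBlocks_multiply, Matrix.fromBlocks_multiply]
    simp only [Matrix.mul_zero, Matrix.zero_mul, add_zero, zero_add]
    rw [h1, Matrix.fromBlocks_one]
  have hEJE : E * stdJ N * E
      = Matrix.fromBlocks 0 (Matrix.diagonal c) (-(Matrix.diagonal c)) 0 := by
    rw [hE, stdJ, Matrix.fromBlocks_multiply, Matrix.fromBlocks_multiply]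
    simp only [Matrix.mul_zero, Matrix.zero_mul, Matrix.mul_one, Matrix.mul_neg,
      Matrix.neg_mul, add_zero, zero_add, Matrix.zero_mul, neg_zero]
    rw [h2]
  have hRBR : R * (Matrix.fromBlocks 0 (Matrix.diagonal c) (-(Matrix.diagonal c)) 0) * Rᵀ
      = K := by
    rw [← hRKR]
    calc R * (Rᵀ * K * R) * Rᵀ = (R * Rᵀ) * K * (R * Rᵀ) := by
          simp only [Matrix.mul_assoc]
      _ = K := by rw [hRRT, Matrix.one_mul, Matrix.mul_one]
  refine ⟨E * Rᵀ * L, μ, fun j => inv_pos.mpr (hcpos j), ?_, ?_⟩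
  · have hSt : (E * Rᵀ * L)ᵀ = L * R * E := by
      rw [Matrix.transpose_mul, Matrix.transpose_mul, hLsym, hEt, Matrix.transpose_transpose,
        Matrix.mul_assoc]
    rw [hSt]
    calc L * R * E * stdJ N * (E * Rᵀ * L)
        = L * R * (E * stdJ N * E) * (Rᵀ * L) := by simp only [Matrix.mul_assoc]
      _ = L * (R * (Matrix.fromBlocks 0 (Matrix.diagonal c) (-(Matrix.diagonal c)) 0) * Rᵀ) * L
          := by rw [hEJE]; simp only [Matrix.mul_assoc]
      _ = L * K * L := by rw [hRBR]
      _ = (L * L⁻¹) * stdJ N * (L⁻¹ * L) := by rw [hKdef]; simp only [Matrix.mul_assoc]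
      _ = stdJ N := by rw [hLinv, hLinv', Matrix.one_mul, Matrix.mul_one]
  · have hSt : (E * Rᵀ * L)ᵀ = L * R * E := by
      rw [Matrix.transpose_mul, Matrix.transpose_mul, hLsym, hEt, Matrix.transpose_transpose,
        Matrix.mul_assoc]
    rw [hSt, ← hD]
    calc M = L * L := hLL.symm
      _ = L * (R * Rᵀ) * L := by rw [hRRT, Matrix.mul_one]
      _ = L * R * (E * D * E) * (Rᵀ * L) := by rw [hEDE, Matrix.mul_one]; simp only [Matrix.mul_assoc]
      _ = L * R * E * D * (E * Rᵀ * L) := by simp only [Matrix.mul_assoc]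
end

section
/- (Narcowich–O'Connell example.) Let α, β > 0 and let W : ℝ² → ℝ be an integrable function such that (x,p) ↦ (x⁴ + p⁴)·W(x,p) is integrable and such that for all (x,p) ∈ ℝ², ∫_{ℝ²} e^{i(x x′ + p p′)} W(x′,p′) dx′ dp′ = (1 − (α/2)x² − (β/2)p²)·exp(−(α²x⁴ + β²p⁴)). Then ∫_{ℝ²} p′⁴ W(x′,p′) dx′ dp′ = −24β² < 0; in particular the fourth momentum moment of W is negative, so W cannot be the Wigner distribution of any quantum state. -/
open MeasureTheory Complex Real Filter

lemma trig_key (u : ℝ) :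
    2 * Real.cos (2*u) - 8 * Real.cos u + 6 = 16 * Real.sin (u/2)^4 := by
  have h1 : Real.cos u = 2 * Real.cos (u/2)^2 - 1 := by
    have := Real.cos_two_mul (u/2); rw [show 2*(u/2) = u by ring] at this; linarith
  have h2 : Real.cos (2*u) = 2 * Real.cos u ^2 - 1 := Real.cos_two_mul u
  have h3 : Real.sin (u/2)^2 + Real.cos (u/2)^2 = 1 := Real.sin_sq_add_cos_sq _
  nlinarith [sq_nonneg (Real.sin (u/2)), sq_nonneg (Real.cos (u/2))]

lemma cexp_comb (u : ℝ) :
    Complex.exp (I*((2*u:ℝ):ℂ)) - 4*Complex.exp (I*((u:ℝ):ℂ)) + 6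
      - 4*Complex.exp (I*((-u:ℝ):ℂ)) + Complex.exp (I*((-(2*u):ℝ):ℂ))
      = ((16 * Real.sin (u/2)^4 : ℝ):ℂ) := by
  have key : ∀ v:ℝ, Complex.exp (I*(v:ℂ)) = (Real.cos v : ℂ) + (Real.sin v : ℂ) * I := by
    intro v
    rw [mul_comm, Complex.exp_mul_I, Complex.ofReal_cos, Complex.ofReal_sin]
  have ht := trig_key u
  have ht' : ((2 * Real.cos (2*u) - 8 * Real.cos u + 6 : ℝ):ℂ) = ((16 * Real.sin (u/2)^4 : ℝ):ℂ) :=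
    congrArg Complex.ofReal ht
  simp only [key, Real.cos_neg, Real.sin_neg]
  push_cast at ht' ⊢
  linear_combination ht'

lemma sinc_lim : Tendsto (fun u:ℝ => Real.sin u / u) (nhdsWithin 0 {0}ᶜ) (nhds 1) := by
  have h := Real.hasDerivAt_sin 0
  rw [hasDerivAt_iff_tendsto_slope] at h
  simp only [Real.cos_zero] at h
  refine h.congr (fun u => ?_)
  simp [slope_def_field]

lemma expm_lim : Tendsto (fun u:ℝ => (1 - Real.exp (-u)) / u) (nhdsWithin 0 {0}ᶜ) (nhds 1) := by
  have h0 : HasDerivAt (fun u:ℝ => Real.exp (-u)) (-1) 0 := by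
    have h1 : HasDerivAt (fun u:ℝ => -u) (-1) 0 := hasDerivAt_neg 0
    have := (Real.hasDerivAt_exp (-0)).comp 0 h1
    simpa [Function.comp_def] using this
  have h : HasDerivAt (fun u:ℝ => -Real.exp (-u)) 1 0 := by simpa [Pi.neg_def] using h0.neg
  rw [hasDerivAt_iff_tendsto_slope] at h
  refine h.congr (fun u => ?_)
  simp [slope_def_field]
  ring

lemma rhs_lim (β : ℝ) (hβ : 0 < β) :
    Tendsto (fun t:ℝ => (2*((1 - β/2*(2*t)^2)*Real.exp (-(β^2*(2*t)^4)))
      - 8*((1 - β/2*t^2)*Real.exp (-(β^2*t^4))) + 6)/t^4)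
      (nhdsWithin 0 {0}ᶜ) (nhds (-24*β^2)) := by
  have hcomp : ∀ c:ℝ, 0 < c → Tendsto (fun t:ℝ => c*t^4) (nhdsWithin 0 {0}ᶜ) (nhdsWithin 0 {0}ᶜ) := by
    intro c hc
    apply tendsto_nhdsWithin_of_tendsto_nhds_of_eventually_within
    · have : Continuous (fun t:ℝ => c*t^4) := by continuity
      simpa using this.tendsto' 0 0 (by simp) |>.mono_left nhdsWithin_le_nhds
    · filter_upwards [self_mem_nhdsWithin] with t ht
      simp only [Set.mem_compl_iff, Set.mem_singleton_iff] at ht ⊢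
      positivity
  have h1 : Tendsto (fun t:ℝ => (1 - Real.exp (-(16*β^2*t^4))) / (16*β^2*t^4))
      (nhdsWithin 0 {0}ᶜ) (nhds 1) := expm_lim.comp (hcomp _ (by positivity))
  have h2 : Tendsto (fun t:ℝ => (1 - Real.exp (-(β^2*t^4))) / (β^2*t^4))
      (nhdsWithin 0 {0}ᶜ) (nhds 1) := expm_lim.comp (hcomp _ (by positivity))
  have hc1 : Tendsto (fun t:ℝ => -32*β^2*(1-2*β*t^2)) (nhdsWithin 0 {0}ᶜ) (nhds (-32*β^2)) := by
    have : Continuous (fun t:ℝ => -32*β^2*(1-2*β*t^2)) := by continuity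
    exact (this.tendsto' 0 (-32*β^2) (by ring)).mono_left nhdsWithin_le_nhds
  have hc2 : Tendsto (fun t:ℝ => 8*β^2*(1-β/2*t^2)) (nhdsWithin 0 {0}ᶜ) (nhds (8*β^2)) := by
    have : Continuous (fun t:ℝ => 8*β^2*(1-β/2*t^2)) := by continuity
    simpa using (this.tendsto' 0 _ (by ring)).mono_left nhdsWithin_le_nhds
  have hmain := (hc1.mul h1).add (hc2.mul h2)
  have hlim : (-32*β^2*1 + 8*β^2*1 : ℝ) = -24*β^2 := by ring
  rw [hlim] at hmain
  refine hmain.congr' ?_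
  filter_upwards [self_mem_nhdsWithin] with t ht
  simp only [Set.mem_compl_iff, Set.mem_singleton_iff] at ht
  have hβ' : (β:ℝ) ≠ 0 := ne_of_gt hβ
  field_simp
  ring_nf

lemma lhs_lim (W : ℝ × ℝ → ℝ) (hint : Integrable W (volume : Measure (ℝ × ℝ)))
    (hmom : Integrable (fun z : ℝ × ℝ => (z.1 ^ 4 + z.2 ^ 4) * W z) (volume : Measure (ℝ × ℝ))) :
    Tendsto (fun t:ℝ => ∫ z : ℝ × ℝ, (16 * Real.sin (t*z.2/2)^4 / t^4) * W z)
      (nhdsWithin 0 {0}ᶜ) (nhds (∫ z : ℝ × ℝ, z.2^4 * W z)) := by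
  apply tendsto_integral_filter_of_dominated_convergence
    (fun z : ℝ × ℝ => |(z.1 ^ 4 + z.2 ^ 4) * W z|)
  · filter_upwards with t
    exact ((Continuous.aestronglyMeasurable (by continuity)).mul hint.aestronglyMeasurable)
  · filter_upwards [self_mem_nhdsWithin] with t ht
    simp only [Set.mem_compl_iff, Set.mem_singleton_iff] at ht
    filter_upwards with z
    have hb : 16 * Real.sin (t*z.2/2)^4 / t^4 ≤ z.2^4 := by
      have h1 : Real.sin (t*z.2/2)^2 ≤ (t*z.2/2)^2 := Real.sin_sq_le_sq
      have h2 : Real.sin (t*z.2/2)^4 ≤ (t*z.2/2)^4 := by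
        have := mul_self_le_mul_self (sq_nonneg (Real.sin (t*z.2/2))) h1
        calc Real.sin (t*z.2/2)^4 = Real.sin (t*z.2/2)^2 * Real.sin (t*z.2/2)^2 := by ring
          _ ≤ (t*z.2/2)^2 * (t*z.2/2)^2 := this
          _ = (t*z.2/2)^4 := by ring
      have ht4 : 0 < t^4 := by positivity
      rw [div_le_iff₀ ht4]
      nlinarith [h2]
    have hb0 : 0 ≤ 16 * Real.sin (t*z.2/2)^4 / t^4 := by positivity
    rw [Real.norm_eq_abs, abs_mul, abs_mul, _root_.abs_of_nonneg hb0]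
    have : |z.1^4 + z.2^4| = z.1^4 + z.2^4 := abs_of_nonneg (by positivity)
    rw [this]
    have hz : z.2^4 ≤ z.1^4 + z.2^4 := by nlinarith [sq_nonneg (z.1^2)]
    exact mul_le_mul_of_nonneg_right (hb.trans hz) (abs_nonneg _)
  · exact hmom.abs
  · filter_upwards with z
    set s := z.2 with hs
    have hT : Tendsto (fun t:ℝ => 2*Real.sin (t*s/2)/t) (nhdsWithin 0 {0}ᶜ) (nhds s) := by
      rcases eq_or_ne s 0 with h0 | h0
      · simp only [h0, mul_zero, zero_div, mul_zero, Real.sin_zero]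
        simpa using tendsto_const_nhds.mono_left nhdsWithin_le_nhds
      · have hm : Tendsto (fun t:ℝ => t*s/2) (nhdsWithin 0 {0}ᶜ) (nhdsWithin 0 {0}ᶜ) := by
          apply tendsto_nhdsWithin_of_tendsto_nhds_of_eventually_within
          · have : Continuous (fun t:ℝ => t*s/2) := by continuity
            simpa using (this.tendsto' 0 0 (by simp)).mono_left nhdsWithin_le_nhds
          · filter_upwards [self_mem_nhdsWithin] with t ht
            simp only [Set.mem_compl_iff, Set.mem_singleton_iff] at ht ⊢
            intro hc
            rcases mul_eq_zero.mp (by linarith [hc] : t*s = 0) with h | h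
            · exact ht h
            · exact h0 h
        have := (sinc_lim.comp hm).mul_const s
        rw [one_mul] at this
        refine this.congr' ?_
        filter_upwards [self_mem_nhdsWithin] with t ht
        simp only [Set.mem_compl_iff, Set.mem_singleton_iff] at ht
        simp only [Function.comp]
        field_simp
    have h4 := (hT.pow 4).mul_const (W z)
    refine h4.congr' ?_
    filter_upwards [self_mem_nhdsWithin] with t ht
    simp only [Set.mem_compl_iff, Set.mem_singleton_iff] at ht
    have : (2*Real.sin (t*s/2)/t)^4 = 16 * Real.sin (t*s/2)^4 / t^4 := by
      field_simp; ring
    rw [this]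

/-- Narcowich–O'Connell example: if `W : ℝ² → ℝ` is integrable with integrable fourth
moments and its (ordinary) Fourier transform equals
`(1 − (α/2)x² − (β/2)p²)·exp(−(α²x⁴ + β²p⁴))`, then the fourth momentum moment of `W` is
`∫ p′⁴ W = −24β² < 0`, so `W` cannot be the Wigner distribution of any quantum state. -/
theorem narcowich_oconnell_fourth_moment
    (α β : ℝ) (hα : 0 < α) (hβ : 0 < β)
    (W : ℝ × ℝ → ℝ)
    (hint : Integrable W (volume : Measure (ℝ × ℝ)))
    (hmom : Integrable (fun z : ℝ × ℝ => (z.1 ^ 4 + z.2 ^ 4) * W z)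
      (volume : Measure (ℝ × ℝ)))
    (hFT : ∀ x p : ℝ,
      (∫ z : ℝ × ℝ, Complex.exp (Complex.I * ((x * z.1 + p * z.2 : ℝ) : ℂ)) * (W z : ℂ))
        = (((1 - α / 2 * x ^ 2 - β / 2 * p ^ 2) *
            Real.exp (-(α ^ 2 * x ^ 4 + β ^ 2 * p ^ 4)) : ℝ) : ℂ)) :
    (∫ z : ℝ × ℝ, z.2 ^ 4 * W z) = -24 * β ^ 2 ∧
    (∫ z : ℝ × ℝ, z.2 ^ 4 * W z) < 0 := by
  have hWC : Integrable (fun z : ℝ × ℝ => (W z : ℂ)) volume := hint.ofReal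
  have hInt : ∀ p : ℝ, Integrable
      (fun z : ℝ × ℝ => Complex.exp (I * (((0:ℝ) * z.1 + p * z.2 : ℝ) : ℂ)) * (W z : ℂ)) volume := by
    intro p
    apply hWC.bdd_mul (c := 1)
    · exact Continuous.aestronglyMeasurable (by continuity)
    · refine Filter.Eventually.of_forall (fun z => ?_)
      rw [Complex.norm_exp]
      simp
  have hF : ∀ p : ℝ,
      (∫ z : ℝ × ℝ, Complex.exp (I * (((0:ℝ) * z.1 + p * z.2 : ℝ) : ℂ)) * (W z : ℂ))
        = (((1 - β/2*p^2) * Real.exp (-(β^2*p^4)) : ℝ) : ℂ) := by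
    intro p
    have h := hFT 0 p
    rw [show (1 - α/2*(0:ℝ)^2 - β/2*p^2) = (1 - β/2*p^2) by ring,
        show (-(α^2*(0:ℝ)^4 + β^2*p^4)) = -(β^2*p^4) by ring] at h
    exact h
  have step1 : ∀ t : ℝ, (∫ z : ℝ × ℝ, 16 * Real.sin (t*z.2/2)^4 * W z)
      = 2*((1 - β/2*(2*t)^2)*Real.exp (-(β^2*(2*t)^4)))
        - 8*((1 - β/2*t^2)*Real.exp (-(β^2*t^4))) + 6 := by
    intro t
    have key : ((∫ z : ℝ × ℝ, 16 * Real.sin (t*z.2/2)^4 * W z : ℝ) : ℂ)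
        = (∫ z : ℝ × ℝ, Complex.exp (I * (((0:ℝ)*z.1 + (2*t)*z.2 : ℝ):ℂ)) * (W z:ℂ))
          - 4*(∫ z : ℝ × ℝ, Complex.exp (I * (((0:ℝ)*z.1 + t*z.2 : ℝ):ℂ)) * (W z:ℂ))
          + 6*(∫ z : ℝ × ℝ, Complex.exp (I * (((0:ℝ)*z.1 + (0:ℝ)*z.2 : ℝ):ℂ)) * (W z:ℂ))
          - 4*(∫ z : ℝ × ℝ, Complex.exp (I * (((0:ℝ)*z.1 + (-t)*z.2 : ℝ):ℂ)) * (W z:ℂ))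
          + (∫ z : ℝ × ℝ, Complex.exp (I * (((0:ℝ)*z.1 + (-(2*t))*z.2 : ℝ):ℂ)) * (W z:ℂ)) := by
      have hLre : ((∫ z : ℝ × ℝ, 16 * Real.sin (t*z.2/2)^4 * W z : ℝ) : ℂ)
          = ∫ z : ℝ × ℝ, ((16 * Real.sin (t*z.2/2)^4 * W z : ℝ) : ℂ) :=
        integral_ofReal.symm
      have i2t := hInt (2*t)
      have it := hInt t
      have i0 := hInt 0
      have imt := hInt (-t)
      have im2t := hInt (-(2*t))
      have h4 : Integrable (fun z : ℝ × ℝ =>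
          Complex.exp (I * (((0:ℝ)*z.1 + (2*t)*z.2 : ℝ):ℂ)) * (W z:ℂ)
          - 4 * (Complex.exp (I * (((0:ℝ)*z.1 + t*z.2 : ℝ):ℂ)) * (W z:ℂ))) volume :=
        i2t.sub (it.const_mul 4)
      have h3 : Integrable (fun z : ℝ × ℝ =>
          Complex.exp (I * (((0:ℝ)*z.1 + (2*t)*z.2 : ℝ):ℂ)) * (W z:ℂ)
          - 4 * (Complex.exp (I * (((0:ℝ)*z.1 + t*z.2 : ℝ):ℂ)) * (W z:ℂ))
          + 6 * (Complex.exp (I * (((0:ℝ)*z.1 + (0:ℝ)*z.2 : ℝ):ℂ)) * (W z:ℂ))) volume :=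
        h4.add (i0.const_mul 6)
      have h2 : Integrable (fun z : ℝ × ℝ =>
          Complex.exp (I * (((0:ℝ)*z.1 + (2*t)*z.2 : ℝ):ℂ)) * (W z:ℂ)
          - 4 * (Complex.exp (I * (((0:ℝ)*z.1 + t*z.2 : ℝ):ℂ)) * (W z:ℂ))
          + 6 * (Complex.exp (I * (((0:ℝ)*z.1 + (0:ℝ)*z.2 : ℝ):ℂ)) * (W z:ℂ))
          - 4 * (Complex.exp (I * (((0:ℝ)*z.1 + (-t)*z.2 : ℝ):ℂ)) * (W z:ℂ))) volume :=
        h3.sub (imt.const_mul 4)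
      rw [hLre,
        show (∫ z : ℝ × ℝ, ((16 * Real.sin (t*z.2/2)^4 * W z : ℝ) : ℂ))
          = ∫ z : ℝ × ℝ, (Complex.exp (I * (((0:ℝ)*z.1 + (2*t)*z.2 : ℝ):ℂ)) * (W z:ℂ)
            - 4 * (Complex.exp (I * (((0:ℝ)*z.1 + t*z.2 : ℝ):ℂ)) * (W z:ℂ))
            + 6 * (Complex.exp (I * (((0:ℝ)*z.1 + (0:ℝ)*z.2 : ℝ):ℂ)) * (W z:ℂ))
            - 4 * (Complex.exp (I * (((0:ℝ)*z.1 + (-t)*z.2 : ℝ):ℂ)) * (W z:ℂ))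
            + Complex.exp (I * (((0:ℝ)*z.1 + (-(2*t))*z.2 : ℝ):ℂ)) * (W z:ℂ)) from ?_,
        integral_add h2 im2t, integral_sub h3 (imt.const_mul 4), integral_add h4 (i0.const_mul 6),
        integral_sub i2t (it.const_mul 4), integral_const_mul, integral_const_mul, integral_const_mul]
      refine integral_congr_ae (Filter.Eventually.of_forall fun z => ?_)
      have hc := cexp_comb (t*z.2)
      beta_reduce
      rw [show ((0:ℝ)*z.1 + (2*t)*z.2 : ℝ) = (2*(t*z.2) : ℝ) by ring,
          show ((0:ℝ)*z.1 + t*z.2 : ℝ) = (t*z.2 : ℝ) by ring,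
          show ((0:ℝ)*z.1 + (0:ℝ)*z.2 : ℝ) = (0 : ℝ) by ring,
          show ((0:ℝ)*z.1 + (-t)*z.2 : ℝ) = (-(t*z.2) : ℝ) by ring,
          show ((0:ℝ)*z.1 + (-(2*t))*z.2 : ℝ) = (-(2*(t*z.2)) : ℝ) by ring]
      rw [Complex.ofReal_mul, ← hc]
      simp only [Complex.ofReal_zero, mul_zero, Complex.exp_zero]
      ring
    rw [hF (2*t), hF t, hF 0, hF (-t), hF (-(2*t))] at key
    rw [show ((-t:ℝ)^2) = t^2 by ring, show ((-t:ℝ)^4) = t^4 by ring,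
        show ((-(2*t):ℝ)^2) = (2*t)^2 by ring, show ((-(2*t):ℝ)^4) = (2*t)^4 by ring] at key
    have key2 : (∫ z : ℝ × ℝ, 16 * Real.sin (t*z.2/2)^4 * W z : ℝ)
        = ((1 - β/2*(2*t)^2)*Real.exp (-(β^2*(2*t)^4)))
          - 4*((1 - β/2*t^2)*Real.exp (-(β^2*t^4)))
          + 6*((1 - β/2*(0:ℝ)^2)*Real.exp (-(β^2*(0:ℝ)^4)))
          - 4*((1 - β/2*t^2)*Real.exp (-(β^2*t^4)))
          + ((1 - β/2*(2*t)^2)*Real.exp (-(β^2*(2*t)^4))) := by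
      exact_mod_cast key
    rw [key2]
    norm_num
    ring
  have hE : (fun t:ℝ => ∫ z : ℝ × ℝ, (16 * Real.sin (t*z.2/2)^4 / t^4) * W z)
      =ᶠ[nhdsWithin 0 {0}ᶜ]
      (fun t:ℝ => (2*((1 - β/2*(2*t)^2)*Real.exp (-(β^2*(2*t)^4)))
        - 8*((1 - β/2*t^2)*Real.exp (-(β^2*t^4))) + 6)/t^4) := by
    filter_upwards [self_mem_nhdsWithin] with t ht
    simp only [Set.mem_compl_iff, Set.mem_singleton_iff] at ht
    have hpt : ∀ z : ℝ × ℝ, (16 * Real.sin (t*z.2/2)^4 / t^4) * W z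
        = (t^4)⁻¹ * (16 * Real.sin (t*z.2/2)^4 * W z) := fun z => by ring
    simp only [hpt]
    rw [integral_const_mul, step1 t]
    ring
  have h1 := (lhs_lim W hint hmom).congr' hE
  have h2 := rhs_lim β hβ
  have heq : (∫ z : ℝ × ℝ, z.2^4 * W z) = -24*β^2 := tendsto_nhds_unique h1 h2
  refine ⟨heq, ?_⟩
  rw [heq]
  nlinarith [sq_nonneg β]
end
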